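/- Let ε > 0, δ ∈ (0,1), and suppose k = (1/ε)·ln((e^ε + 2δ − 1)/((e^ε + 1)δ)) is a positive integer. Define π₀ by π₀(0)=0 and π₀(n+1) = min(e^ε·π₀(n)+δ, 1−e^{−ε}(1−π₀(n)−δ), 1). Then π₀ satisfies the reflection symmetry π₀(n) = 1 − π₀(2k + 1 − n) for all integers n with 0 ≤ n ≤ 2k + 1. -/

import Mathlib

/-!
Write `E = exp ε` and `x n = δ (1 + E + ⋯ + E^(n-1))`, the orbit of `0` under `z ↦ E z + δ`.
While `(E + 1) z ≤ 1 - δ` the first branch of the minimum is active, so `π₀ n = x n` for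
`n ≤ k + 1`. The defining equation of `k` says exactly that `(E + 1) x k = 1 - δ`, i.e.
`x (k + 1) = 1 - x k`. Beyond that point the second branch is active, and it inverts the first
one under the reflection `z ↦ 1 - z`: the step maps `1 - (E y + δ)` to `1 - y`. Hence the
second half of the sequence retraces the first half reflected.
-/

open Real Finset

/-- One step of the recursion of `π₀`, with `E = exp ε`. -/
noncomputable def piStep (E δ z : ℝ) : ℝ :=
  min (min (E * z + δ) (1 - E⁻¹ * (1 - z - δ))) 1

def affineOrbit (E δ : ℝ) (n : ℕ) : ℝ :=
  δ * ∑ i ∈ range n, E ^ i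

section

variable {E δ : ℝ}

theorem affineOrbit_zero : affineOrbit E δ 0 = 0 := by
  simp [affineOrbit]

theorem affineOrbit_succ (n : ℕ) : affineOrbit E δ (n + 1) = E * affineOrbit E δ n + δ := by
  simp only [affineOrbit, geom_sum_succ]
  ring

theorem affineOrbit_mul_sub_one (n : ℕ) :
    affineOrbit E δ n * (E - 1) = δ * (E ^ n - 1) := by
  rw [affineOrbit, mul_assoc, geom_sum_mul]

theorem affineOrbit_nonneg (hE : 0 ≤ E) (hδ : 0 ≤ δ) (n : ℕ) : 0 ≤ affineOrbit E δ n := by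
  unfold affineOrbit
  positivity

theorem affineOrbit_monotone (hE : 0 ≤ E) (hδ : 0 ≤ δ) : Monotone (affineOrbit E δ) := by
  intro m n hmn
  refine mul_le_mul_of_nonneg_left ?_ hδ
  exact sum_le_sum_of_subset_of_nonneg (range_mono hmn) fun i _ _ => pow_nonneg hE i

theorem add_one_mul_affineOrbit_le_of_le (hE : 0 ≤ E) (hδ : 0 ≤ δ) {m k : ℕ} (hmk : m ≤ k)
    (hk : (E + 1) * affineOrbit E δ k ≤ 1 - δ) : (E + 1) * affineOrbit E δ m ≤ 1 - δ :=
  le_trans (by gcongr; exact affineOrbit_monotone hE hδ hmk) hk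

theorem piStep_eq_of_le (hE : 1 ≤ E) {z : ℝ} (hz : 0 ≤ z) (h : (E + 1) * z ≤ 1 - δ) :
    piStep E δ z = E * z + δ := by
  have hE0 : 0 < E := by linarith
  have hsecond : E * z + δ ≤ 1 - E⁻¹ * (1 - z - δ) := by
    have : E⁻¹ * (1 - z - δ) ≤ 1 - E * z - δ := by
      rw [inv_mul_le_iff₀ hE0]
      nlinarith [mul_nonneg (sub_nonneg.2 hE) (sub_nonneg.2 h)]
    linarith
  rw [piStep, min_eq_left hsecond, min_eq_left (by nlinarith)]

/-- The second branch undoes the first one under the reflection `z ↦ 1 - z`. -/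
theorem piStep_one_sub (hE : 1 ≤ E) {y : ℝ} (hy : 0 ≤ y) (h : (E + 1) * y ≤ 1 - δ) :
    piStep E δ (1 - (E * y + δ)) = 1 - y := by
  have hsecond : 1 - E⁻¹ * (1 - (1 - (E * y + δ)) - δ) = 1 - y := by
    field_simp
    ring
  have hfirst : 1 - y ≤ E * (1 - (E * y + δ)) + δ := by
    nlinarith [mul_nonneg (sub_nonneg.2 hE) (sub_nonneg.2 h)]
  rw [piStep, hsecond, min_eq_right hfirst, min_eq_left (by linarith)]

variable {k : ℕ} {p : ℕ → ℝ}

theorem eq_affineOrbit_of_le_succ (hE : 1 ≤ E) (hδ : 0 ≤ δ)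
    (hk : (E + 1) * affineOrbit E δ k ≤ 1 - δ) (h0 : p 0 = 0)
    (hrec : ∀ n, p (n + 1) = piStep E δ (p n)) :
    ∀ n ≤ k + 1, p n = affineOrbit E δ n := by
  intro n hn
  induction n with
  | zero => rw [h0, affineOrbit_zero]
  | succ m ih =>
    have hm := add_one_mul_affineOrbit_le_of_le (by linarith) hδ (by omega : m ≤ k) hk
    rw [hrec, ih (by omega), affineOrbit_succ,
      piStep_eq_of_le hE (affineOrbit_nonneg (by linarith) hδ m) hm]

theorem eq_one_sub_affineOrbit (hE : 1 ≤ E) (hδ : 0 ≤ δ)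
    (hk : (E + 1) * affineOrbit E δ k = 1 - δ) (h0 : p 0 = 0)
    (hrec : ∀ n, p (n + 1) = piStep E δ (p n)) :
    ∀ i ≤ k, p (k + 1 + i) = 1 - affineOrbit E δ (k - i) := by
  have hlow := eq_affineOrbit_of_le_succ hE hδ hk.le h0 hrec
  intro i hi
  induction i with
  | zero =>
    rw [add_zero, hlow _ le_rfl, affineOrbit_succ, Nat.sub_zero]
    linarith
  | succ i ih =>
    obtain ⟨j, rfl⟩ : ∃ j, k = j + 1 + i := ⟨k - (i + 1), by omega⟩
    have hj := add_one_mul_affineOrbit_le_of_le (by linarith) hδ (by omega : j ≤ j + 1 + i) hk.le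
    rw [← add_assoc, hrec, ih (by omega), show j + 1 + i - i = j + 1 by omega, affineOrbit_succ,
      piStep_one_sub hE (affineOrbit_nonneg (by linarith) hδ j) hj,
      show j + 1 + i - (i + 1) = j by omega]

theorem reflection_of_affineOrbit_eq (hE : 1 ≤ E) (hδ : 0 ≤ δ)
    (hk : (E + 1) * affineOrbit E δ k = 1 - δ) (h0 : p 0 = 0)
    (hrec : ∀ n, p (n + 1) = piStep E δ (p n)) :
    ∀ n ≤ 2 * k + 1, p n = 1 - p (2 * k + 1 - n) := by
  have hlow := eq_affineOrbit_of_le_succ hE hδ hk.le h0 hrec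
  have hhigh := eq_one_sub_affineOrbit hE hδ hk h0 hrec
  intro n hn
  rcases le_or_gt n k with hnk | hkn
  · rw [show 2 * k + 1 - n = k + 1 + (k - n) by omega, hhigh _ (by omega),
      show k - (k - n) = n by omega, hlow n (by omega)]
    ring
  · obtain ⟨i, rfl⟩ : ∃ i, n = k + 1 + i := ⟨n - (k + 1), by omega⟩
    rw [hhigh i (by omega), show 2 * k + 1 - (k + 1 + i) = k - i by omega,
      hlow _ (by omega)]

end

theorem add_one_mul_affineOrbit_of_log_eq {ε δ : ℝ} (hε : 0 < ε) (hδ : 0 < δ) {k : ℕ}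
    (hk : (k : ℝ) = (1 / ε) * Real.log ((exp ε + 2 * δ - 1) / ((exp ε + 1) * δ))) :
    (exp ε + 1) * affineOrbit (exp ε) δ k = 1 - δ := by
  have hE : 1 < exp ε := one_lt_exp_iff.2 hε
  have hpow : exp ε ^ k = (exp ε + 2 * δ - 1) / ((exp ε + 1) * δ) := by
    have hlog : (k : ℝ) * ε = Real.log ((exp ε + 2 * δ - 1) / ((exp ε + 1) * δ)) := by
      rw [hk]
      field_simp
    rw [← exp_nat_mul, hlog, exp_log (by apply div_pos <;> nlinarith)]
  have horbit := affineOrbit_mul_sub_one (E := exp ε) (δ := δ) k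
  rw [hpow] at horbit
  apply mul_right_cancel₀ (sub_ne_zero.2 hE.ne')
  rw [mul_assoc, horbit]
  field_simp
  ring

theorem pi_opt_reflection_symmetry_general
    (ε δ : ℝ) (hε : 0 < ε) (hδ0 : 0 < δ)
    (k : ℕ)
    (hk : (k : ℝ) = (1 / ε) * Real.log ((exp ε + 2 * δ - 1) / ((exp ε + 1) * δ)))
    (π₀ : ℕ → ℝ) (h0 : π₀ 0 = 0)
    (hrec : ∀ n, π₀ (n + 1) =
      min (min (exp ε * π₀ n + δ) (1 - exp (-ε) * (1 - π₀ n - δ))) 1) :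
    ∀ n : ℕ, n ≤ 2 * k + 1 → π₀ n = 1 - π₀ (2 * k + 1 - n) := by
  refine reflection_of_affineOrbit_eq (one_lt_exp_iff.2 hε).le hδ0.le
    (add_one_mul_affineOrbit_of_log_eq hε hδ0 hk) h0 fun n => ?_
  rw [hrec, piStep, exp_neg]

theorem pi_opt_reflection_symmetry
    (ε δ : ℝ) (hε : 0 < ε) (hδ0 : 0 < δ) (hδ1 : δ < 1)
    (k : ℕ) (hk1 : 1 ≤ k)
    (hk : (k : ℝ) = (1 / ε) * Real.log ((exp ε + 2 * δ - 1) / ((exp ε + 1) * δ)))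
    (π₀ : ℕ → ℝ) (h0 : π₀ 0 = 0)
    (hrec : ∀ n, π₀ (n + 1) =
      min (min (exp ε * π₀ n + δ) (1 - exp (-ε) * (1 - π₀ n - δ))) 1) :
    ∀ n : ℕ, n ≤ 2 * k + 1 → π₀ n = 1 - π₀ (2 * k + 1 - n) :=
  pi_opt_reflection_symmetry_general ε δ hε hδ0 k hk π₀ h0 hrec
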